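/- arXiv:0910.2320 — 2 statements merged into one kernel-verified Lean document; each statement's English description precedes it below -/
import Mathlib

section
/- Suppose ρ is a probability distribution stationary for W. Define c(u) := ∑_x ρ(x) V(x) (e^{uL} Q)(x). Then for every u ≥ 0 the function c is differentiable at u with some derivative c′(u), and ∑_x ρ(x) (L′ (e^{uL} Q))(x) = −a·c′(u) − b ∑_x ρ(x) (L V)(x) (e^{uL} Q)(x). (In the nonequilibrium stationary regime the response function reduces to R(t,s) = a ∂_s⟨V(x_s)Q(x_t)⟩_ρ − b⟨(LV)(x_s) Q(x_t)⟩_ρ.) -/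
/-- The generator matrix of the Markov jump process with rates `W`:
entry `W x y` at `(x, y)` for `x ≠ y` and `-∑_{y ≠ x} W x y` on the diagonal. -/
noncomputable def genMatrix {K : Type*} [Fintype K] [DecidableEq K] (W : K → K → ℝ) :
    Matrix K K ℝ :=
  Matrix.of fun x y =>
    if x = y then -∑ z ∈ Finset.univ.filter (fun z => z ≠ x), W x z else W x y

/-- The semigroup `e^{tL}` (matrix exponential of `t • L`). -/
noncomputable def expL {K : Type*} [Fintype K] [DecidableEq K] (W : K → K → ℝ) (t : ℝ) :
    Matrix K K ℝ :=
  NormedSpace.exp (t • genMatrix W)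

/-- Action of `e^{tL}` on observables: `(e^{tL} f)(x) = ∑ y, (e^{tL})_{x,y} f y`. -/
noncomputable def actE {K : Type*} [Fintype K] [DecidableEq K] (W : K → K → ℝ) (t : ℝ)
    (f : K → ℝ) : K → ℝ :=
  fun x => ∑ y, expL W t x y * f y

/-- Action of `e^{tL}` on distributions: `(μ e^{tL})(x) = ∑ z, μ z (e^{tL})_{z,x}`. -/
noncomputable def muE {K : Type*} [Fintype K] [DecidableEq K] (W : K → K → ℝ) (μ : K → ℝ)
    (t : ℝ) : K → ℝ :=
  fun x => ∑ z, μ z * expL W t z x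

/-- The backward generator acting on observables. -/
noncomputable def genL {K : Type*} [Fintype K] (W : K → K → ℝ) (f : K → ℝ) : K → ℝ :=
  fun x => ∑ y, W x y * (f y - f x)

/-- The linearized perturbation operator
`(L' f)(x) = ∑ y, W x y * (b V y - a V x) * (f y - f x)`. -/
noncomputable def genL' {K : Type*} [Fintype K] (W : K → K → ℝ) (V : K → ℝ) (a b : ℝ)
    (f : K → ℝ) : K → ℝ :=
  fun x => ∑ y, W x y * (b * V y - a * V x) * (f y - f x)

/-- The perturbed rates `W_h x y = W x y * exp (h (b V y - a V x))`. -/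
noncomputable def pertW {K : Type*} (W : K → K → ℝ) (V : K → ℝ) (a b h : ℝ) :
    K → K → ℝ :=
  fun x y => W x y * Real.exp (h * (b * V y - a * V x))

/-!
By Kolmogorov's backward equation `∂ᵤ e^{uL} Q = L e^{uL} Q`, the derivative of `c` is
`c'(u) = ∑ₓ ρ V L(e^{uL} Q)`. Pointwise `L' g = b (L(V g) - g LV) - a V Lg`, and stationarity of `ρ`
makes `∑ₓ ρ L(V g)` vanish, which leaves exactly `-a c'(u) - b ∑ₓ ρ LV g` for `g = e^{uL} Q`.
-/

open Matrix

section Generator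

attribute [local instance] Matrix.linftyOpNormedRing Matrix.linftyOpNormedAlgebra

variable {K : Type*} [Fintype K] [DecidableEq K] (W : K → K → ℝ)

theorem genMatrix_mulVec (f : K → ℝ) : genMatrix W *ᵥ f = genL W f := by
  ext x
  have hdiag : genMatrix W x x = -∑ y ∈ Finset.univ.erase x, W x y := by
    simp [genMatrix, Finset.filter_ne']
  rw [mulVec, dotProduct, genL, ← Finset.add_sum_erase _ _ (Finset.mem_univ x),
    ← Finset.add_sum_erase _ (fun y => W x y * (f y - f x)) (Finset.mem_univ x), hdiag,
    sub_self, mul_zero, zero_add, neg_mul, Finset.sum_mul, ← Finset.sum_neg_distrib,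
    ← Finset.sum_add_distrib]
  refine Finset.sum_congr rfl fun y hy => ?_
  simp only [genMatrix, of_apply, (Finset.ne_of_mem_erase hy).symm, if_false]
  ring

theorem actE_eq_mulVec (t : ℝ) (f : K → ℝ) : actE W t f = expL W t *ᵥ f := rfl

theorem hasDerivAt_actE (f : K → ℝ) (t : ℝ) :
    HasDerivAt (fun s => actE W s f) (genL W (actE W t f)) t := by
  let evalAt : Matrix K K ℝ →L[ℝ] K → ℝ :=
    LinearMap.toContinuousLinearMap
      ((LinearMap.applyₗ f) ∘ₗ (toLin' : Matrix K K ℝ ≃ₗ[ℝ] _).toLinearMap)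
  have h := evalAt.hasFDerivAt.comp_hasDerivAt t (hasDerivAt_exp_smul_const' (genMatrix W) t)
  have hL : evalAt (genMatrix W * expL W t) = genL W (actE W t f) := by
    change (genMatrix W * expL W t) *ᵥ f = _
    rw [← mulVec_mulVec, genMatrix_mulVec, actE_eq_mulVec]
  exact h.congr_deriv hL

theorem hasDerivAt_sum_mul_actE (g f : K → ℝ) (t : ℝ) :
    HasDerivAt (fun s => ∑ x, g x * actE W s f x) (∑ x, g x * genL W (actE W t f) x) t :=
  HasDerivAt.fun_sum fun x _ => ((hasDerivAt_pi.mp (hasDerivAt_actE W f t)) x).const_mul (g x)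

end Generator

section Perturbation

variable {K : Type*} [Fintype K] (W : K → K → ℝ) (V : K → ℝ) (a b : ℝ)

theorem genL'_apply (g : K → ℝ) (x : K) :
    genL' W V a b g x = b * (genL W (V * g) x - genL W V x * g x) - a * V x * genL W g x := by
  simp only [genL', genL, Pi.mul_apply, Finset.mul_sum, Finset.sum_mul, ← Finset.sum_sub_distrib]
  exact Finset.sum_congr rfl fun y _ => by ring

theorem sum_mul_genL'_of_stationary (ρ : K → ℝ) (hstat : ∀ f : K → ℝ, ∑ x, ρ x * genL W f x = 0)
    (g : K → ℝ) :
    ∑ x, ρ x * genL' W V a b g x =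
      -a * ∑ x, ρ x * V x * genL W g x - b * ∑ x, ρ x * genL W V x * g x := by
  have hsplit : ∑ x, ρ x * genL' W V a b g x = b * ∑ x, ρ x * genL W (V * g) x +
      (-a * ∑ x, ρ x * V x * genL W g x - b * ∑ x, ρ x * genL W V x * g x) := by
    simp only [genL'_apply, Finset.mul_sum, ← Finset.sum_sub_distrib, ← Finset.sum_add_distrib]
    exact Finset.sum_congr rfl fun x _ => by ring
  rw [hsplit, hstat, mul_zero, zero_add]

end Perturbation

theorem stationary_response_formula_general
    {K : Type*} [Fintype K] [DecidableEq K]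
    (W : K → K → ℝ)
    (ρ : K → ℝ)
    (hstat : ∀ f : K → ℝ, ∑ x, ρ x * genL W f x = 0)
    (V Q : K → ℝ) (a b : ℝ) (u : ℝ) :
    ∃ c' : ℝ,
      HasDerivAt (fun v => ∑ x, ρ x * V x * actE W v Q x) c' u ∧
      ∑ x, ρ x * genL' W V a b (actE W u Q) x =
        -a * c' - b * ∑ x, ρ x * genL W V x * actE W u Q x :=
  ⟨_, hasDerivAt_sum_mul_actE W (fun x => ρ x * V x) Q u,
    sum_mul_genL'_of_stationary W V a b ρ hstat _⟩

/-- stationary nonequilibrium response: if `ρ` is stationary for `W` and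
`c u = ∑ x, ρ x * V x * (e^{uL} Q) x`, then for every `u ≥ 0` the derivative `c' u`
exists and `∑ x, ρ x * (L' (e^{uL} Q)) x = -a c'(u) - b ∑ x, ρ x * (LV) x * (e^{uL} Q) x`. -/
theorem stationary_response_formula
    {K : Type*} [Fintype K] [Nonempty K] [DecidableEq K]
    (W : K → K → ℝ) (hW : ∀ x y : K, x ≠ y → 0 ≤ W x y)
    (ρ : K → ℝ) (hρ0 : ∀ x, 0 ≤ ρ x) (hρ1 : ∑ x, ρ x = 1)
    (hstat : ∀ f : K → ℝ, ∑ x, ρ x * genL W f x = 0)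
    (V Q : K → ℝ) (a b : ℝ) (u : ℝ) (hu : 0 ≤ u) :
    ∃ c' : ℝ,
      HasDerivAt (fun v => ∑ x, ρ x * V x * actE W v Q x) c' u ∧
      ∑ x, ρ x * genL' W V a b (actE W u Q) x =
        -a * c' - b * ∑ x, ρ x * genL W V x * actE W u Q x :=
  stationary_response_formula_general W ρ hstat V Q a b u
end

section
/- Suppose ρ satisfies detailed balance for W, and let a + b = β. Then for every t ≥ 0 and every observable Q : K → ℝ, the function h ↦ ∑_x ρ(x) (e^{t L_h} Q)(x) is differentiable at h = 0 (HasDerivAt) with derivative β [ ∑_x ρ(x) V(x) Q(x) − ∑_x ρ(x) V(x) (e^{tL} Q)(x) ]. (Integrated equilibrium response: ⟨Q(t)⟩^h − ⟨Q(t)⟩_eq = hβ[⟨V(t)Q(t)⟩_eq − ⟨V(0)Q(t)⟩_eq] + o(h).) -/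
/-!
Write `e^{t L_h} = exp (A h)` with `A h = t • L_h`. Differentiating the exponential series term
by term (legitimate because `A` is `C¹`, so near `0` the differentiated series is dominated by
`∑ D C^{n-1} / (n-1)!`), the derivative of `exp ∘ A` at `0` is `∑ₙ (1/n!) ∑ᵢ X^{n-1-i} D X^i`,
where `X = t L` and `D = t L'`, `L'` being the generator with rates `W x y (b V y - a V x)`.
Detailed balance makes `ρ` stationary, `ρ X = 0`, which kills every summand except `D X^{n-1}`,
and turns the perturbation into `ρ D = -(a + b) (ρ V) X`. Hence `ρ (exp ∘ A)'(0) =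
-β (ρ V) (e^{tL} - 1)`, and pairing with `Q` gives the claim.
-/

open scoped Nat Matrix
open Finset NormedSpace

section ExpAlongCurve

variable {𝕂 𝔸 : Type*} [RCLike 𝕂] [NormedRing 𝔸] [NormedAlgebra 𝕂 𝔸]

theorem norm_sum_pow_mul_mul_pow_le [NormOneClass 𝔸] (x d : 𝔸) (n : ℕ) :
    ‖∑ i ∈ range n, x ^ (n.pred - i) * d * x ^ i‖ ≤ n * (‖x‖ ^ n.pred * ‖d‖) := by
  calc _ ≤ ∑ i ∈ range n, ‖x ^ (n.pred - i) * d * x ^ i‖ := norm_sum_le _ _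
    _ ≤ ∑ _i ∈ range n, ‖x‖ ^ n.pred * ‖d‖ := by
      refine sum_le_sum fun i hi => ?_
      have hi : i ≤ n.pred := Nat.le_pred_of_lt (mem_range.1 hi)
      calc ‖x ^ (n.pred - i) * d * x ^ i‖ ≤ ‖x‖ ^ (n.pred - i) * ‖d‖ * ‖x‖ ^ i := by
            refine (norm_mul_le _ _).trans ?_
            gcongr
            · exact (norm_mul_le _ _).trans (by gcongr; exact norm_pow_le _ _)
            · exact norm_pow_le _ _
        _ = ‖x‖ ^ n.pred * ‖d‖ := by rw [mul_right_comm, ← pow_add, Nat.sub_add_cancel hi]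
    _ = _ := by rw [sum_const, card_range, nsmul_eq_mul]

theorem summable_inv_factorial_mul_nat_mul_pow_pred (C : ℝ) :
    Summable fun n : ℕ => (n ! : ℝ)⁻¹ * (n * C ^ n.pred) := by
  rw [← summable_nat_add_iff 1]
  refine (Real.summable_pow_div_factorial C).congr fun n => ?_
  have : (n ! : ℝ) ≠ 0 := by positivity
  push_cast [Nat.factorial_succ]
  field_simp
  simp

variable (𝕂) in
noncomputable def expDerivTerm (x d : 𝔸) (n : ℕ) : 𝔸 :=
  (n !⁻¹ : 𝕂) • ∑ i ∈ range n, x ^ (n.pred - i) * d * x ^ i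

theorem norm_expDerivTerm_le [NormOneClass 𝔸] {x d : 𝔸} {C D : ℝ} (hx : ‖x‖ ≤ C)
    (hd : ‖d‖ ≤ D) (n : ℕ) :
    ‖expDerivTerm 𝕂 x d n‖ ≤ (n ! : ℝ)⁻¹ * (n * C ^ n.pred) * D := by
  have hC : 0 ≤ C := (norm_nonneg x).trans hx
  have hD : 0 ≤ D := (norm_nonneg d).trans hd
  rw [expDerivTerm, norm_smul, norm_inv, RCLike.norm_natCast, mul_assoc]
  gcongr
  calc _ ≤ (n : ℝ) * (‖x‖ ^ n.pred * ‖d‖) := norm_sum_pow_mul_mul_pow_le x d n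
    _ ≤ n * C ^ n.pred * D := by rw [← mul_assoc]; gcongr

variable [NormOneClass 𝔸] [CompleteSpace 𝔸]

theorem summable_expDerivTerm (x d : 𝔸) : Summable (expDerivTerm 𝕂 x d) :=
  .of_norm_bounded ((summable_inv_factorial_mul_nat_mul_pow_pred ‖x‖).mul_right ‖d‖)
    (norm_expDerivTerm_le le_rfl le_rfl)

theorem hasDerivAt_exp_comp {f f' : 𝕂 → 𝔸} (hf : ∀ y, HasDerivAt f (f' y) y)
    (hf' : Continuous f') (x : 𝕂) :
    HasDerivAt (fun y => exp (f y)) (∑' n, expDerivTerm 𝕂 (f x) (f' x) n) x := by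
  have hfc : Continuous f := continuous_iff_continuousAt.2 fun y => (hf y).continuousAt
  obtain ⟨C, hC⟩ := (isCompact_closedBall x 1).exists_bound_of_continuousOn hfc.continuousOn
  obtain ⟨D, hD⟩ := (isCompact_closedBall x 1).exists_bound_of_continuousOn hf'.continuousOn
  simp only [exp_eq_tsum 𝕂]
  have hx_mem : x ∈ Metric.ball x 1 := Metric.mem_ball_self one_pos
  have hterm : ∀ n y, HasDerivAt (fun y => (n !⁻¹ : 𝕂) • f y ^ n)
      (expDerivTerm 𝕂 (f y) (f' y) n) y :=
    fun n y => ((hf y).fun_pow' n).const_smul (n !⁻¹ : 𝕂)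
  have hbound : ∀ n, ∀ y ∈ Metric.ball x 1,
      ‖expDerivTerm 𝕂 (f y) (f' y) n‖ ≤ (n ! : ℝ)⁻¹ * (n * C ^ n.pred) * D :=
    fun n y hy => norm_expDerivTerm_le (hC y (Metric.ball_subset_closedBall hy))
      (hD y (Metric.ball_subset_closedBall hy)) n
  exact hasDerivAt_tsum_of_isPreconnected
    ((summable_inv_factorial_mul_nat_mul_pow_pred C).mul_right D) Metric.isOpen_ball
    (convex_ball x 1).isPreconnected (fun n y _ => hterm n y) hbound
    hx_mem (expSeries_summable' (f x)) hx_mem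

theorem map_tsum_expDerivTerm {F : Type*} [NormedAddCommGroup F] [NormedSpace 𝕂 F]
    {Φ Ψ : 𝔸 →L[𝕂] F} {x d : 𝔸} (hx : ∀ M, Φ (x * M) = 0) (hd : ∀ M, Φ (d * M) = Ψ (x * M)) :
    Φ (∑' n, expDerivTerm 𝕂 x d n) = Ψ (exp x - 1) := by
  have hterm : ∀ n, Φ (expDerivTerm 𝕂 x d (n + 1)) = Ψ (((n + 1)! : 𝕂)⁻¹ • x ^ (n + 1)) := by
    intro n
    -- every summand but `d * x ^ n` starts with a factor `x`
    have hleft : ∀ i ∈ range n, Φ (x ^ (n - i) * d * x ^ i) = 0 := fun i hi => by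
      obtain ⟨k, hk⟩ := Nat.exists_eq_add_of_lt (mem_range.1 hi)
      rw [show n - i = k + 1 by omega, pow_succ', mul_assoc, mul_assoc, hx]
    rw [expDerivTerm, Nat.pred_succ, sum_range_succ, map_smul, map_smul, map_add, map_sum,
      sum_eq_zero hleft, Nat.sub_self, pow_zero, one_mul, hd, ← pow_succ', zero_add]
  have hexp : HasSum (fun n => (((n + 1)! : 𝕂)⁻¹ • x ^ (n + 1))) (exp x - 1) := by
    simpa using (hasSum_nat_add_iff' 1).2 (exp_series_hasSum_exp' (𝕂 := 𝕂) x)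
  have hΦ : HasSum (fun n => Φ (expDerivTerm 𝕂 x d n)) (Ψ (exp x - 1)) := by
    rw [← hasSum_nat_add_iff' 1, sum_range_one]
    simp only [hterm]
    simpa [expDerivTerm] using hexp.mapL Ψ
  rw [Φ.map_tsum (summable_expDerivTerm x d), hΦ.tsum_eq]

end ExpAlongCurve

-- Any submultiplicative norm would do: it only serves to differentiate `exp` on matrices.
attribute [local instance] Matrix.linftyOpNormedRing Matrix.linftyOpNormedAlgebra

section Generator

variable {K : Type*} [Fintype K] [DecidableEq K]

theorem genMatrix_apply (c : K → K → ℝ) (x y : K) :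
    genMatrix c x y = c x y - if x = y then ∑ z, c x z else 0 := by
  by_cases hxy : x = y
  · subst hxy
    simp [genMatrix, filter_ne', sum_erase_eq_sub]
  · simp [genMatrix, hxy]

theorem vecMul_genMatrix (v : K → ℝ) (c : K → K → ℝ) (y : K) :
    (v ᵥ* genMatrix c) y = ∑ x, (v x * c x y - v y * c y x) := by
  simp only [Matrix.vecMul, dotProduct, genMatrix_apply, mul_sub, mul_ite, mul_zero,
    sum_sub_distrib, sum_ite_eq', mem_univ, if_true, mul_sum]

variable {W : K → K → ℝ} {ρ : K → ℝ}

theorem vecMul_genMatrix_eq_zero (hdb : ∀ x y, ρ x * W x y = ρ y * W y x) :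
    ρ ᵥ* genMatrix W = 0 := by
  funext y
  rw [vecMul_genMatrix]
  exact sum_eq_zero fun x _ => by rw [hdb x y, sub_self]

theorem vecMul_genMatrix_potential (hdb : ∀ x y, ρ x * W x y = ρ y * W y x)
    (V : K → ℝ) (a b : ℝ) :
    ρ ᵥ* genMatrix (fun x y => W x y * (b * V y - a * V x))
      = -(a + b) • ((fun x => ρ x * V x) ᵥ* genMatrix W) := by
  funext y
  simp only [vecMul_genMatrix, Pi.smul_apply, smul_eq_mul, mul_sum]
  refine sum_congr rfl fun x _ => ?_
  linear_combination b * (V x + V y) * hdb x y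

end Generator

theorem pertW_zero {K : Type*} (W : K → K → ℝ) (V : K → ℝ) (a b : ℝ) : pertW W V a b 0 = W := by
  funext x y
  simp [pertW]

section Perturbation

variable {K : Type*} [Fintype K] [DecidableEq K]

noncomputable def genMatrixLinear : (K → K → ℝ) →ₗ[ℝ] Matrix K K ℝ where
  toFun := genMatrix
  map_add' c d := by
    ext x y
    simp only [genMatrix_apply, Pi.add_apply, Matrix.add_apply, sum_add_distrib]
    split_ifs <;> ring
  map_smul' r c := by
    ext x y
    simp only [genMatrix_apply, Pi.smul_apply, Matrix.smul_apply, smul_eq_mul, RingHom.id_apply,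
      ← mul_sum]
    split_ifs <;> ring

theorem hasDerivAt_genMatrix_pertW (W : K → K → ℝ) (V : K → ℝ) (a b h : ℝ) :
    HasDerivAt (fun h => genMatrix (pertW W V a b h))
      (genMatrix fun x y => pertW W V a b h x y * (b * V y - a * V x)) h := by
  have hrates : HasDerivAt (pertW W V a b)
      (fun x y => pertW W V a b h x y * (b * V y - a * V x)) h :=
    hasDerivAt_pi.2 fun x => hasDerivAt_pi.2 fun y =>
      by simpa [pertW, mul_assoc] using
        ((hasDerivAt_mul_const (b * V y - a * V x)).exp).const_mul (W x y)
  exact (LinearMap.toContinuousLinearMap genMatrixLinear).hasFDerivAt.comp_hasDerivAt h hrates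

theorem continuous_genMatrix_pertW_mul (W : K → K → ℝ) (V : K → ℝ) (a b : ℝ) :
    Continuous fun h => genMatrix fun x y => pertW W V a b h x y * (b * V y - a * V x) :=
  (LinearMap.continuous_of_finiteDimensional genMatrixLinear).comp (by unfold pertW; fun_prop)

end Perturbation

section Pairing

variable {K : Type*} [Fintype K]

noncomputable def pairing (μ Q : K → ℝ) : Matrix K K ℝ →L[ℝ] ℝ :=
  LinearMap.toContinuousLinearMap
    { toFun := fun M => (μ ᵥ* M) ⬝ᵥ Q
      map_add' := fun M N => by rw [Matrix.vecMul_add, add_dotProduct]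
      map_smul' := fun r M => by rw [Matrix.vecMul_smul, smul_dotProduct]; rfl }

theorem pairing_apply (μ Q : K → ℝ) (M : Matrix K K ℝ) :
    pairing μ Q M = ∑ x, μ x * ∑ y, M x y * Q y := by
  simp only [pairing, LinearMap.coe_toContinuousLinearMap', LinearMap.coe_mk, AddHom.coe_mk,
    Matrix.vecMul, dotProduct, sum_mul, mul_sum, mul_assoc]
  exact sum_comm

theorem pairing_mul (μ Q : K → ℝ) (M N : Matrix K K ℝ) :
    pairing μ Q (M * N) = pairing (μ ᵥ* M) Q N := by
  simp [pairing, Matrix.vecMul_vecMul]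

theorem pairing_one [DecidableEq K] (μ Q : K → ℝ) : pairing μ Q 1 = μ ⬝ᵥ Q := by
  simp [pairing]

end Pairing

section DetailedBalance

variable {K : Type*} [Fintype K] [DecidableEq K] {W : K → K → ℝ} {ρ : K → ℝ}

theorem pairing_smul_genMatrix_mul_eq_zero (hdb : ∀ x y, ρ x * W x y = ρ y * W y x)
    (Q : K → ℝ) (t : ℝ) (M : Matrix K K ℝ) : pairing ρ Q (t • genMatrix W * M) = 0 := by
  rw [pairing_mul, Matrix.vecMul_smul, vecMul_genMatrix_eq_zero hdb, smul_zero]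
  simp [pairing]

theorem pairing_smul_genMatrix_potential_mul (hdb : ∀ x y, ρ x * W x y = ρ y * W y x)
    (Q V : K → ℝ) (a b t : ℝ) (M : Matrix K K ℝ) :
    pairing ρ Q (t • genMatrix (fun x y => W x y * (b * V y - a * V x)) * M)
      = -(a + b) * pairing (fun x => ρ x * V x) Q (t • genMatrix W * M) := by
  rw [pairing_mul, pairing_mul, Matrix.vecMul_smul, Matrix.vecMul_smul,
    vecMul_genMatrix_potential hdb, smul_comm]
  simp [pairing, Matrix.smul_vecMul]

end DetailedBalance

theorem integrated_equilibrium_response_general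
    {K : Type*} [Fintype K] [Nonempty K] [DecidableEq K]
    (W : K → K → ℝ)
    (ρ : K → ℝ)
    (hdb : ∀ x y : K, ρ x * W x y = ρ y * W y x)
    (V Q : K → ℝ) (a b β : ℝ) (hab : a + b = β) (t : ℝ) :
    HasDerivAt
      (fun h : ℝ => ∑ x, ρ x * ∑ y, expL (pertW W V a b h) t x y * Q y)
      (β * ((∑ x, ρ x * V x * Q x) - ∑ x, ρ x * V x * actE W t Q x)) 0 := by
  set σ : K → ℝ := fun x => ρ x * V x
  have hexp := hasDerivAt_exp_comp (𝕂 := ℝ)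
    (fun h => (hasDerivAt_genMatrix_pertW W V a b h).const_smul t)
    ((continuous_genMatrix_pertW_mul W V a b).const_smul t) 0
  have hvalue := map_tsum_expDerivTerm (Φ := pairing ρ Q) (Ψ := -β • pairing σ Q)
    (fun M => pairing_smul_genMatrix_mul_eq_zero hdb Q t M)
    (fun M => (pairing_smul_genMatrix_potential_mul hdb Q V a b t M).trans (by rw [hab]; rfl))
  have hcomp := (pairing ρ Q).hasFDerivAt.comp_hasDerivAt (0 : ℝ) hexp
  simp only [Pi.smul_apply, pertW_zero] at hcomp
  rw [hvalue] at hcomp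
  have hfun : (fun h => ∑ x, ρ x * ∑ y, expL (pertW W V a b h) t x y * Q y)
      = pairing ρ Q ∘ fun h => exp (t • genMatrix (pertW W V a b h)) :=
    funext fun h => (pairing_apply ρ Q _).symm
  have hval : (-β • pairing σ Q) (exp (t • genMatrix W) - 1)
      = β * ((∑ x, ρ x * V x * Q x) - ∑ x, ρ x * V x * actE W t Q x) := by
    rw [smul_apply, map_sub, pairing_one, pairing_apply]
    simp only [σ, actE, expL, dotProduct, smul_eq_mul]
    ring
  rw [hfun, ← hval]
  exact hcomp

/-- integrated equilibrium response: under detailed balance and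
`a + b = β`, for every `t ≥ 0` the map `h ↦ ∑ x, ρ x * (e^{t L_h} Q) x` is
differentiable at `h = 0` with derivative
`β * (⟨V(t)Q(t)⟩_eq - ⟨V(0)Q(t)⟩_eq)`. -/
theorem integrated_equilibrium_response
    {K : Type*} [Fintype K] [Nonempty K] [DecidableEq K]
    (W : K → K → ℝ) (hW : ∀ x y : K, x ≠ y → 0 ≤ W x y)
    (ρ : K → ℝ) (hρ0 : ∀ x, 0 ≤ ρ x) (hρ1 : ∑ x, ρ x = 1)
    (hdb : ∀ x y : K, ρ x * W x y = ρ y * W y x)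
    (V Q : K → ℝ) (a b β : ℝ) (hab : a + b = β) (t : ℝ) (ht : 0 ≤ t) :
    HasDerivAt
      (fun h : ℝ => ∑ x, ρ x * ∑ y, expL (pertW W V a b h) t x y * Q y)
      (β * ((∑ x, ρ x * V x * Q x) - ∑ x, ρ x * V x * actE W t Q x)) 0 :=
  integrated_equilibrium_response_general W ρ hdb V Q a b β hab t
end
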